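/- Let $x$ be a complex random variable with finite fourth moment, $v > 0$, and $z \sim \mathcal{CN}(0, v)$ independent of $x$. Define $\tilde{\eta}(y) = \mathbb{E}[x \mid x + z = y]$ and $\mathrm{MMSE}(v) = \mathbb{E}[|x - \tilde{\eta}(x+z)|^2]$. Then $\mathbb{E}[z^* \tilde{\eta}(x+z)] = \mathrm{MMSE}(v)$. -/

import Mathlib

open MeasureTheory ProbabilityTheory Complex

section Gaussian

lemma gaussian_memLp_two (V : NNReal) : MemLp (id : ℝ → ℝ) 2 (gaussianReal 0 V) := by
  by_cases hV : V = 0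
  · subst hV
    rw [gaussianReal_zero_var]
    have h0 : (id : ℝ → ℝ) =ᵐ[Measure.dirac (0:ℝ)] (fun _ => (0:ℝ)) := by
      rw [Filter.eventuallyEq_iff_exists_mem]
      exact ⟨{0}, by simp [MeasureTheory.ae_dirac_eq], by intro x hx; simpa using hx⟩
    exact (memLp_const (0:ℝ)).ae_eq h0.symm
  · refine (memLp_two_iff_integrable_sq aestronglyMeasurable_id).mpr ?_
    rw [gaussianReal_of_var_ne_zero _ hV,
      integrable_withDensity_iff (measurable_gaussianPDF _ _)
        (ae_of_all _ fun x => ENNReal.ofReal_lt_top)]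
    have hVpos : (0:ℝ) < (V:ℝ) := by positivity
    have hb : (0:ℝ) < (2 * (V:ℝ))⁻¹ := by positivity
    have base : Integrable (fun x : ℝ => x ^ ((2:ℕ):ℝ) * Real.exp (-(2 * (V:ℝ))⁻¹ * x ^ 2)) :=
      integrable_rpow_mul_exp_neg_mul_sq hb (by norm_num)
    simp only [Real.rpow_natCast] at base
    have : (fun x : ℝ => id x ^ 2 * (gaussianPDF 0 V x).toReal)
        = fun x : ℝ => (Real.sqrt (2 * Real.pi * V))⁻¹ *
            (x ^ 2 * Real.exp (-(2 * (V:ℝ))⁻¹ * x ^ 2)) := by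
      funext x
      rw [gaussianPDF, ENNReal.toReal_ofReal (gaussianPDFReal_nonneg _ _ _), gaussianPDFReal]
      have harg : -(x - 0) ^ 2 / (2 * (V:ℝ)) = -(2 * (V:ℝ))⁻¹ * x ^ 2 := by
        rw [sub_zero]; field_simp
      simp only [id]
      rw [harg]; ring
    rw [this]
    exact base.const_mul _

lemma gaussian_integral_id_zero (V : NNReal) : ∫ t, t ∂(gaussianReal 0 V) = 0 := by
  by_cases hV : V = 0
  · subst hV; rw [gaussianReal_zero_var]; simp
  · have hone : (⟨(-1:ℝ)^2, sq_nonneg _⟩ : NNReal) = 1 := by ext; norm_num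
    have hmap : (gaussianReal 0 V).map (fun t => (-1:ℝ) * t) = gaussianReal 0 V := by
      rw [gaussianReal_map_const_mul]; congr 1
      · simp
      · ext; simp
    have hint : Integrable (fun t : ℝ => t) (gaussianReal 0 V) :=
      (gaussian_memLp_two V).integrable one_le_two
    have h2 := integral_map (μ := gaussianReal 0 V) (φ := fun t => (-1:ℝ) * t)
      (f := fun t => t) (measurable_id.const_mul _).aemeasurable aestronglyMeasurable_id
    rw [hmap] at h2
    simp only [neg_one_mul] at h2
    rw [integral_neg] at h2
    linarith

end Gaussian

section CondexpHelpers

variable {Ω : Type*} {m m0 : MeasurableSpace Ω} {μ : Measure Ω}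

lemma memLp_mul_of_memLp_two {𝕜 : Type*} [RCLike 𝕜] {f g : Ω → 𝕜}
    (hf : MemLp f 2 μ) (hg : MemLp g 2 μ) :
    Integrable (fun ω => f ω * g ω) μ := by
  have hcf : MemLp (fun ω => (starRingEnd 𝕜) (f ω)) 2 μ :=
    (RCLike.conjLIE (K := 𝕜)).lipschitz.comp_memLp (map_zero _) hf
  have h := L2.integrable_inner (𝕜 := 𝕜) (hcf.toLp _) (hg.toLp g)
  refine (integrable_congr ?_).mp h
  filter_upwards [hcf.coeFn_toLp, hg.coeFn_toLp] with ω e1 e2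
  simp only [RCLike.inner_apply, e1, e2]
  rw [starRingEnd_self_apply, mul_comm]

lemma memLp_two_condexp (hm : m ≤ m0) [IsFiniteMeasure μ] {f : Ω → ℂ}
    (hf : MemLp f 2 μ) : MemLp (μ[f|m]) 2 μ := by
  haveI : SigmaFinite (μ.trim hm) := inferInstance
  set F := hf.toLp f with hF
  set G : Lp ℂ 2 μ := ((condExpL2 ℂ ℂ hm F : lpMeas ℂ ℂ m 2 μ) : Lp ℂ 2 μ) with hG
  have hGae : (G : Ω → ℂ) =ᵐ[μ] μ[f|m] := by
    refine ae_eq_condExp_of_forall_setIntegral_eq hm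
      (memLp_one_iff_integrable.mp (hf.mono_exponent one_le_two))
      (fun s _ _ => (memLp_one_iff_integrable.mp
        ((Lp.memLp G).mono_exponent one_le_two)).integrableOn)
      (fun s hs hμs => ?_) (lpMeas.aestronglyMeasurable _)
    rw [integral_condExpL2_eq hm F hs hμs.ne]
    exact setIntegral_congr_ae (hm s hs) (hf.coeFn_toLp.mono fun ω hω _ => hω)
  exact (Lp.memLp G).ae_eq hGae

lemma condexp_clm_comm (hm : m ≤ m0) [IsFiniteMeasure μ] (T : ℂ →L[ℝ] ℝ) {f : Ω → ℂ}
    (hf : Integrable f μ) :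
    (μ[fun ω => T (f ω)|m]) =ᵐ[μ] fun ω => T ((μ[f|m]) ω) := by
  haveI : SigmaFinite (μ.trim hm) := inferInstance
  refine (ae_eq_condExp_of_forall_setIntegral_eq hm (T.integrable_comp hf)
    (fun s _ _ => (T.integrable_comp integrable_condExp).integrableOn)
    (fun s hs hμs => ?_)
    ((T.continuous.comp_stronglyMeasurable stronglyMeasurable_condExp).aestronglyMeasurable)).symm
  rw [T.integral_comp_comm integrable_condExp.integrableOn,
    setIntegral_condExp hm hf hs, ← T.integral_comp_comm hf.integrableOn]

lemma integral_mul_condexp_real (hm : m ≤ m0) [IsProbabilityMeasure μ] {u w : Ω → ℝ}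
    (hu : StronglyMeasurable[m] u) (hu2 : MemLp u 2 μ) (hw2 : MemLp w 2 μ) :
    ∫ ω, u ω * (μ[w|m]) ω ∂μ = ∫ ω, u ω * w ω ∂μ := by
  haveI : SigmaFinite (μ.trim hm) := inferInstance
  have huw : Integrable (u * w) μ := memLp_mul_of_memLp_two hu2 hw2
  have h := condExp_mul_of_stronglyMeasurable_left (μ := μ) hu huw (hw2.integrable one_le_two)
  calc ∫ ω, u ω * (μ[w|m]) ω ∂μ = ∫ ω, (μ[u * w|m]) ω ∂μ := by
        refine integral_congr_ae ?_
        filter_upwards [h] with ω hω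
        rw [hω]; rfl
    _ = ∫ ω, u ω * w ω ∂μ := integral_condExp hm

end CondexpHelpers

section ComplexPullout

variable {Ω : Type*} {m m0 : MeasurableSpace Ω} {μ : Measure Ω}

lemma integral_mul_condexp_complex (hm : m ≤ m0) [IsProbabilityMeasure μ] {f g : Ω → ℂ}
    (hfm : StronglyMeasurable[m] f) (hf2 : MemLp f 2 μ) (hg2 : MemLp g 2 μ) :
    ∫ ω, f ω * (μ[g|m]) ω ∂μ = ∫ ω, f ω * g ω ∂μ := by
  haveI : SigmaFinite (μ.trim hm) := inferInstance
  set η := μ[g|m] with hη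
  have hη2 : MemLp η 2 μ := memLp_two_condexp hm hg2
  have hfre2 : MemLp (fun ω => (f ω).re) 2 μ := by simpa using hf2.re
  have hfim2 : MemLp (fun ω => (f ω).im) 2 μ := by simpa using hf2.im
  have hgre2 : MemLp (fun ω => (g ω).re) 2 μ := by simpa using hg2.re
  have hgim2 : MemLp (fun ω => (g ω).im) 2 μ := by simpa using hg2.im
  have hηre2 : MemLp (fun ω => (η ω).re) 2 μ := by simpa using hη2.re
  have hηim2 : MemLp (fun ω => (η ω).im) 2 μ := by simpa using hη2.im
  have hfre : StronglyMeasurable[m] (fun ω => (f ω).re) :=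
    Complex.continuous_re.comp_stronglyMeasurable hfm
  have hfim : StronglyMeasurable[m] (fun ω => (f ω).im) :=
    Complex.continuous_im.comp_stronglyMeasurable hfm
  have hre : (μ[fun ω => (g ω).re|m]) =ᵐ[μ] fun ω => (η ω).re := by
    simpa using condexp_clm_comm hm Complex.reCLM (hg2.integrable one_le_two)
  have him : (μ[fun ω => (g ω).im|m]) =ᵐ[μ] fun ω => (η ω).im := by
    simpa using condexp_clm_comm hm Complex.imCLM (hg2.integrable one_le_two)
  have H : ∀ u : Ω → ℝ, StronglyMeasurable[m] u → MemLp u 2 μ → ∀ w : Ω → ℝ, MemLp w 2 μ →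
      ∀ w' : Ω → ℝ, (μ[w|m]) =ᵐ[μ] w' → ∫ ω, u ω * w' ω ∂μ = ∫ ω, u ω * w ω ∂μ := by
    intro u hu hu2 w hw2 w' hww'
    rw [← integral_mul_condexp_real hm hu hu2 hw2]
    exact integral_congr_ae (hww'.mono fun ω hω => by simp only []; rw [← hω])
  have hrr := H _ hfre hfre2 _ hgre2 _ hre
  have hii := H _ hfim hfim2 _ hgim2 _ him
  have hri := H _ hfre hfre2 _ hgim2 _ him
  have hir := H _ hfim hfim2 _ hgre2 _ hre
  have hfη : Integrable (fun ω => f ω * η ω) μ := memLp_mul_of_memLp_two hf2 hη2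
  have hfg : Integrable (fun ω => f ω * g ω) μ := memLp_mul_of_memLp_two hf2 hg2
  rw [← integral_re_add_im hfη, ← integral_re_add_im hfg]
  have ere : ∫ ω, RCLike.re (f ω * η ω) ∂μ = ∫ ω, RCLike.re (f ω * g ω) ∂μ := by
    simp only [RCLike.re_to_complex, Complex.mul_re]
    rw [integral_sub (memLp_mul_of_memLp_two hfre2 hηre2) (memLp_mul_of_memLp_two hfim2 hηim2),
      integral_sub (memLp_mul_of_memLp_two hfre2 hgre2) (memLp_mul_of_memLp_two hfim2 hgim2),
      hrr, hii]
  have eim : ∫ ω, RCLike.im (f ω * η ω) ∂μ = ∫ ω, RCLike.im (f ω * g ω) ∂μ := by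
    simp only [RCLike.im_to_complex, Complex.mul_im]
    rw [integral_add (memLp_mul_of_memLp_two hfre2 hηim2) (memLp_mul_of_memLp_two hfim2 hηre2),
      integral_add (memLp_mul_of_memLp_two hfre2 hgim2) (memLp_mul_of_memLp_two hfim2 hgre2),
      hri, hir]
  rw [ere, eim]

end ComplexPullout


/-- `z` is circularly symmetric complex Gaussian `CN(0, v)` under `μ`:
its real and imaginary parts are independent `N(0, v/2)`. -/
def IsCN {Ω : Type*} [MeasurableSpace Ω] (μ : Measure Ω) (z : Ω → ℂ) (v : ℝ) : Prop :=
  Measure.map (fun ω => (z ω).re) μ = gaussianReal 0 (Real.toNNReal (v / 2)) ∧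
  Measure.map (fun ω => (z ω).im) μ = gaussianReal 0 (Real.toNNReal (v / 2)) ∧
  IndepFun (fun ω => (z ω).re) (fun ω => (z ω).im) μ

/-- Stein-type identity for the posterior mean under AWGN: if `y = x + z` with
`z ∼ CN(0,v)` independent of `x` and `E[|x|⁴] < ∞`, then
`E[z* E[x|y]] = MMSE(v) = E[|x - E[x|y]|²]`. -/
theorem stein_posterior_mean_identity {Ω : Type*} [MeasurableSpace Ω]
    (μ : Measure Ω) [IsProbabilityMeasure μ]
    (x z : Ω → ℂ) (hx : Measurable x) (hz : Measurable z)
    (hx4 : MemLp x 4 μ) (v : ℝ) (hv : 0 < v)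
    (hzCN : IsCN μ z v) (hxz : IndepFun x z μ)
    (y : Ω → ℂ) (hy : y = fun ω => x ω + z ω)
    (mY : MeasurableSpace Ω) (hmY : mY = MeasurableSpace.comap y inferInstance) :
    ∫ ω, (starRingEnd ℂ) (z ω) * (μ[x|mY]) ω ∂μ
      = ((∫ ω, ‖x ω - (μ[x|mY]) ω‖ ^ 2 ∂μ : ℝ) : ℂ) := by
  obtain ⟨hzre_law, hzim_law, -⟩ := hzCN
  subst hmY
  have hy_meas : Measurable y := by rw [hy]; exact hx.add hz
  have hm : MeasurableSpace.comap y inferInstance ≤ _ := measurable_iff_comap_le.mp hy_meas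
  haveI : SigmaFinite (μ.trim hm) := inferInstance
  set η := μ[x|(MeasurableSpace.comap y inferInstance)] with hηdef
  have key : ∀ w : ℂ, (starRingEnd ℂ) w * w = ((‖w‖ ^ 2 : ℝ) : ℂ) := fun w => by
    rw [mul_comm, Complex.mul_conj]
    norm_cast
    rw [Complex.sq_norm]
  -- MemLp facts
  have hx2 : MemLp x 2 μ := hx4.mono_exponent (by norm_num)
  have hzre2 : MemLp (fun ω => (z ω).re) 2 μ := by
    have h := (memLp_map_measure_iff (f := fun ω => (z ω).re) (g := (id : ℝ → ℝ))
      aestronglyMeasurable_id ((Complex.measurable_re.comp hz).aemeasurable)).mp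
      (by rw [hzre_law]; exact gaussian_memLp_two _)
    simpa [Function.comp] using h
  have hzim2 : MemLp (fun ω => (z ω).im) 2 μ := by
    have h := (memLp_map_measure_iff (f := fun ω => (z ω).im) (g := (id : ℝ → ℝ))
      aestronglyMeasurable_id ((Complex.measurable_im.comp hz).aemeasurable)).mp
      (by rw [hzim_law]; exact gaussian_memLp_two _)
    simpa [Function.comp] using h
  have hz2 : MemLp z 2 μ := memLp_re_im_iff.mp ⟨by simpa using hzre2, by simpa using hzim2⟩
  have hy2 : MemLp y 2 μ := by rw [hy]; exact hx2.add hz2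
  have hη2 : MemLp η 2 μ := memLp_two_condexp hm hx2
  have hxre2 : MemLp (fun ω => (x ω).re) 2 μ := by simpa using hx2.re
  have hxim2 : MemLp (fun ω => (x ω).im) 2 μ := by simpa using hx2.im
  have conjmem : ∀ f : Ω → ℂ, MemLp f 2 μ → MemLp (fun ω => (starRingEnd ℂ) (f ω)) 2 μ :=
    fun f hf => (RCLike.conjLIE (K := ℂ)).lipschitz.comp_memLp (map_zero _) hf
  have hconjx2 := conjmem x hx2
  have hconjz2 := conjmem z hz2
  have hconjy2 := conjmem y hy2
  have hconjη2 := conjmem η hη2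
  -- measurability wrt (MeasurableSpace.comap y inferInstance)
  have hym : Measurable[MeasurableSpace.comap y inferInstance] y :=
    measurable_iff_comap_le.mpr le_rfl
  have hconjy : StronglyMeasurable[(MeasurableSpace.comap y inferInstance)] (fun ω => (starRingEnd ℂ) (y ω)) :=
    (RCLike.continuous_conj (K := ℂ)).comp_stronglyMeasurable hym.stronglyMeasurable
  have hconjη : StronglyMeasurable[(MeasurableSpace.comap y inferInstance)] (fun ω => (starRingEnd ℂ) (η ω)) :=
    (RCLike.continuous_conj (K := ℂ)).comp_stronglyMeasurable stronglyMeasurable_condExp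
  -- mean zero of z components
  have hEzre : ∫ ω, (z ω).re ∂μ = 0 := by
    have h := integral_map (μ := μ) (φ := fun ω => (z ω).re) (f := fun t : ℝ => t)
      ((Complex.measurable_re.comp hz).aemeasurable) aestronglyMeasurable_id
    rw [← h, hzre_law]
    exact gaussian_integral_id_zero _
  have hEzim : ∫ ω, (z ω).im ∂μ = 0 := by
    have h := integral_map (μ := μ) (φ := fun ω => (z ω).im) (f := fun t : ℝ => t)
      ((Complex.measurable_im.comp hz).aemeasurable) aestronglyMeasurable_id
    rw [← h, hzim_law]
    exact gaussian_integral_id_zero _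
  -- independence products
  have indep_zero : ∀ a b : Ω → ℝ, MemLp a 2 μ → MemLp b 2 μ → IndepFun a b μ →
      (∫ ω, a ω ∂μ) = 0 → ∫ ω, a ω * b ω ∂μ = 0 := by
    intro a b ha hb hab h0
    have := hab.integral_mul_eq_mul_integral ha.1 hb.1
    rw [show (fun ω => a ω * b ω) = a * b from rfl, this, h0, zero_mul]
  have hzr_xr : IndepFun (fun ω => (z ω).re) (fun ω => (x ω).re) μ :=
    hxz.symm.comp Complex.measurable_re Complex.measurable_re
  have hzr_xi : IndepFun (fun ω => (z ω).re) (fun ω => (x ω).im) μ :=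
    hxz.symm.comp Complex.measurable_re Complex.measurable_im
  have hzi_xr : IndepFun (fun ω => (z ω).im) (fun ω => (x ω).re) μ :=
    hxz.symm.comp Complex.measurable_im Complex.measurable_re
  have hzi_xi : IndepFun (fun ω => (z ω).im) (fun ω => (x ω).im) μ :=
    hxz.symm.comp Complex.measurable_im Complex.measurable_im
  have hEzx : ∫ ω, (starRingEnd ℂ) (z ω) * x ω ∂μ = 0 := by
    have hint : Integrable (fun ω => (starRingEnd ℂ) (z ω) * x ω) μ :=
      memLp_mul_of_memLp_two hconjz2 hx2
    rw [← integral_re_add_im hint]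
    have h1 : ∫ ω, RCLike.re ((starRingEnd ℂ) (z ω) * x ω) ∂μ = 0 := by
      simp only [RCLike.re_to_complex, Complex.mul_re, Complex.conj_re, Complex.conj_im,
        neg_mul, sub_neg_eq_add]
      rw [integral_add (memLp_mul_of_memLp_two hzre2 hxre2)
        (memLp_mul_of_memLp_two hzim2 hxim2),
        indep_zero _ _ hzre2 hxre2 hzr_xr hEzre,
        indep_zero _ _ hzim2 hxim2 hzi_xi hEzim, add_zero]
    have h2 : ∫ ω, RCLike.im ((starRingEnd ℂ) (z ω) * x ω) ∂μ = 0 := by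
      simp only [RCLike.im_to_complex, Complex.mul_im, Complex.conj_re, Complex.conj_im,
        neg_mul, ← sub_eq_add_neg]
      rw [integral_sub (memLp_mul_of_memLp_two hzre2 hxim2)
        (memLp_mul_of_memLp_two hzim2 hxre2),
        indep_zero _ _ hzre2 hxim2 hzr_xi hEzre,
        indep_zero _ _ hzim2 hxre2 hzi_xr hEzim, sub_zero]
    rw [h1, h2]
    simp
  -- pull-out steps
  have step1 : ∫ ω, (starRingEnd ℂ) (y ω) * η ω ∂μ = ∫ ω, (starRingEnd ℂ) (y ω) * x ω ∂μ :=
    integral_mul_condexp_complex hm hconjy hconjy2 hx2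
  have step2 : ∫ ω, (starRingEnd ℂ) (η ω) * η ω ∂μ = ∫ ω, (starRingEnd ℂ) (η ω) * x ω ∂μ :=
    integral_mul_condexp_complex hm hconjη hconjη2 hx2
  have hB : ∫ ω, (starRingEnd ℂ) (η ω) * η ω ∂μ = ((∫ ω, ‖η ω‖ ^ 2 ∂μ : ℝ) : ℂ) := by
    simp_rw [key]
    exact integral_ofReal
  have step3 : ∫ ω, (starRingEnd ℂ) (x ω) * η ω ∂μ = ((∫ ω, ‖η ω‖ ^ 2 ∂μ : ℝ) : ℂ) := by
    calc ∫ ω, (starRingEnd ℂ) (x ω) * η ω ∂μ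
        = ∫ ω, (starRingEnd ℂ) (x ω * (starRingEnd ℂ) (η ω)) ∂μ := by
          refine integral_congr_ae (ae_of_all _ fun ω => ?_)
          beta_reduce
          rw [map_mul, Complex.conj_conj]
      _ = (starRingEnd ℂ) (∫ ω, x ω * (starRingEnd ℂ) (η ω) ∂μ) := integral_conj
      _ = (starRingEnd ℂ) (∫ ω, (starRingEnd ℂ) (η ω) * x ω ∂μ) := by
          congr 1
          exact integral_congr_ae (ae_of_all _ fun ω => mul_comm _ _)
      _ = (starRingEnd ℂ) (((∫ ω, ‖η ω‖ ^ 2 ∂μ : ℝ) : ℂ)) := by rw [← step2, hB]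
      _ = ((∫ ω, ‖η ω‖ ^ 2 ∂μ : ℝ) : ℂ) := Complex.conj_ofReal _
  have hstep2' : ∫ ω, (starRingEnd ℂ) (η ω) * x ω ∂μ = ((∫ ω, ‖η ω‖ ^ 2 ∂μ : ℝ) : ℂ) := by
    rw [← step2, hB]
  have hyx : ∫ ω, (starRingEnd ℂ) (y ω) * x ω ∂μ = ∫ ω, (starRingEnd ℂ) (x ω) * x ω ∂μ := by
    calc ∫ ω, (starRingEnd ℂ) (y ω) * x ω ∂μ
        = ∫ ω, ((starRingEnd ℂ) (x ω) * x ω + (starRingEnd ℂ) (z ω) * x ω) ∂μ := by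
          refine integral_congr_ae (ae_of_all _ fun ω => ?_)
          simp only [hy, map_add, add_mul]
      _ = (∫ ω, (starRingEnd ℂ) (x ω) * x ω ∂μ) + ∫ ω, (starRingEnd ℂ) (z ω) * x ω ∂μ :=
          integral_add (memLp_mul_of_memLp_two hconjx2 hx2) (memLp_mul_of_memLp_two hconjz2 hx2)
      _ = ∫ ω, (starRingEnd ℂ) (x ω) * x ω ∂μ := by rw [hEzx, add_zero]
  -- LHS
  have hLHS : ∫ ω, (starRingEnd ℂ) (z ω) * η ω ∂μ
      = (∫ ω, (starRingEnd ℂ) (x ω) * x ω ∂μ) - ((∫ ω, ‖η ω‖ ^ 2 ∂μ : ℝ) : ℂ) := by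
    calc ∫ ω, (starRingEnd ℂ) (z ω) * η ω ∂μ
        = ∫ ω, ((starRingEnd ℂ) (y ω) * η ω - (starRingEnd ℂ) (x ω) * η ω) ∂μ := by
          refine integral_congr_ae (ae_of_all _ fun ω => ?_)
          simp only [hy, map_add, add_mul]
          ring
      _ = (∫ ω, (starRingEnd ℂ) (y ω) * η ω ∂μ) - ∫ ω, (starRingEnd ℂ) (x ω) * η ω ∂μ :=
          integral_sub (memLp_mul_of_memLp_two hconjy2 hη2) (memLp_mul_of_memLp_two hconjx2 hη2)
      _ = _ := by rw [step1, hyx, step3]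
  -- RHS
  have hRHS : ((∫ ω, ‖x ω - η ω‖ ^ 2 ∂μ : ℝ) : ℂ)
      = (∫ ω, (starRingEnd ℂ) (x ω) * x ω ∂μ) - ((∫ ω, ‖η ω‖ ^ 2 ∂μ : ℝ) : ℂ) := by
    calc ((∫ ω, ‖x ω - η ω‖ ^ 2 ∂μ : ℝ) : ℂ)
        = ∫ ω, (starRingEnd ℂ) (x ω - η ω) * (x ω - η ω) ∂μ := by
          simp_rw [key]
          exact integral_ofReal.symm
      _ = ∫ ω, ((starRingEnd ℂ) (x ω) * x ω - (starRingEnd ℂ) (x ω) * η ω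
            - (starRingEnd ℂ) (η ω) * x ω + (starRingEnd ℂ) (η ω) * η ω) ∂μ := by
          refine integral_congr_ae (ae_of_all _ fun ω => ?_)
          beta_reduce
          rw [map_sub]
          ring
      _ = ((∫ ω, (starRingEnd ℂ) (x ω) * x ω ∂μ) - (∫ ω, (starRingEnd ℂ) (x ω) * η ω ∂μ)
            - (∫ ω, (starRingEnd ℂ) (η ω) * x ω ∂μ)) + ∫ ω, (starRingEnd ℂ) (η ω) * η ω ∂μ := by
          rw [integral_add, integral_sub, integral_sub]
          · exact memLp_mul_of_memLp_two hconjx2 hx2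
          · exact memLp_mul_of_memLp_two hconjx2 hη2
          · exact (memLp_mul_of_memLp_two hconjx2 hx2).sub (memLp_mul_of_memLp_two hconjx2 hη2)
          · exact memLp_mul_of_memLp_two hconjη2 hx2
          · exact ((memLp_mul_of_memLp_two hconjx2 hx2).sub
              (memLp_mul_of_memLp_two hconjx2 hη2)).sub (memLp_mul_of_memLp_two hconjη2 hx2)
          · exact memLp_mul_of_memLp_two hconjη2 hη2
      _ = _ := by
          rw [step3, hstep2', hB]
          ring
  rw [hLHS, hRHS]
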